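/- With the coaction ρ : F → F ⊗ H and the ideals I ⊆ F (generated by λ_i - λ_1^{N_i - 2}, i = 2,3,4) and J ⊆ H (the Slavnov–Taylor Hopf ideal generated by components of Y_{v_i} - Y_{v_1}^{N_i-2}), one has ρ(I) ⊆ I ⊗ H + F ⊗ J. Consequently ρ descends to a coaction of the quotient Hopf algebra H/J on the quotient algebra F/I. -/

import Mathlib

open scoped TensorProduct
noncomputable section

abbrev Md5 := Fin 5 →₀ ℕ

/-- The QCD renormalization Hopf algebra `H`: free commutative ℂ-algebra on the symbols
`pₙ(Y_{v_j})` (`j = 1,…,5`) and `pₙ(√G^{e_i})` (`i = 1,2,3`), `n ∈ ℕ⁵ \ {0}`. -/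
abbrev BH := MvPolynomial ((Fin 5 ⊕ Fin 3) × {n : Md5 // n ≠ 0}) ℂ

def PgenH (r : Fin 5 ⊕ Fin 3) (n : Md5) : BH :=
  if h : n = 0 then 1 else MvPolynomial.X (r, ⟨n, h⟩)

/-- The series `Y_{v_j} = Σ_n pₙ(Y_{v_j})`. -/
def Yg (j : Fin 5) : MvPowerSeries (Fin 5) BH := fun n => PgenH (Sum.inl j) n

/-- The series `√G^{e_i} = Σ_n pₙ(√G^{e_i})`. -/
def Gg (i : Fin 3) : MvPowerSeries (Fin 5) BH := fun n => PgenH (Sum.inr i) n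

def serOf (r : Fin 5 ⊕ Fin 3) : MvPowerSeries (Fin 5) BH :=
  match r with | Sum.inl j => Yg j | Sum.inr i => Gg i

/-- The coproduct: `Δ(Y_{v_j}) = Σ_n Y_{v_j} Y^n ⊗ pₙ(Y_{v_j})` and
`Δ(√G^{e_i}) = Σ_n √G^{e_i}·Y^n ⊗ pₙ(√G^{e_i})`, componentwise on generators. -/
def ΔH : BH →ₐ[ℂ] BH ⊗[ℂ] BH :=
  MvPolynomial.aeval (fun p : (Fin 5 ⊕ Fin 3) × {n : Md5 // n ≠ 0} =>
    ∑ ab ∈ Finset.HasAntidiagonal.antidiagonal (p.2 : Md5),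
      (MvPowerSeries.coeff ab.1 (serOf p.1 * ∏ j, (Yg j) ^ ((ab.2 : Md5) j))) ⊗ₜ[ℂ]
        PgenH p.1 ab.2)

/-- The counit. -/
def εH : BH →ₐ[ℂ] ℂ := MvPolynomial.aeval (fun _ => (0 : ℂ))

/-- `F = ℂ[[λ₁,…,λ₅]] ⊗ ℂ[φ₁,φ₂,φ₃]`, realized as power series in `λ` with polynomial
coefficients in the field symbols `φ`. -/
abbrev FF := MvPowerSeries (Fin 5) (MvPolynomial (Fin 3) ℂ)

/-- The completed tensor product `F ⊗̂ H`. -/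
abbrev TT := MvPowerSeries (Fin 5) (MvPolynomial (Fin 3) BH)

/-- The completed tensor product `F ⊗̂ H ⊗̂ H`. -/
abbrev TT2 := MvPowerSeries (Fin 5) (MvPolynomial (Fin 3) (BH ⊗[ℂ] BH))

/-- The product series `Y₁^(a₁)···Y₅^(a₅)·(√G¹)^(d₁)···(√G³)^(d₃)`. -/
def prodSer (a : Md5) (d : Fin 3 →₀ ℕ) : MvPowerSeries (Fin 5) BH :=
  (∏ j, (Yg j) ^ (a j)) * ∏ i, (Gg i) ^ (d i)

/-- The coaction `ρ : F → F ⊗̂ H`, `ρ(λ^a φ^d) = Σ_n λ^(a+n) φ^d ⊗ pₙ(Y^a (√G)^d)`. -/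
def ρH (S : FF) : TT :=
  fun m => ∑ an ∈ Finset.HasAntidiagonal.antidiagonal m,
    ∑ d ∈ (S an.1).support,
      MvPolynomial.coeff d (S an.1) •
        (MvPolynomial.monomial d (MvPowerSeries.coeff an.2 (prodSer an.1 d)))

/-- `ρ ⊗ id : F ⊗̂ H → F ⊗̂ H ⊗̂ H`. -/
def ρhat (S : TT) : TT2 :=
  fun m => ∑ an ∈ Finset.HasAntidiagonal.antidiagonal m,
    ∑ d ∈ (S an.1).support,
      MvPolynomial.monomial d
        ((MvPowerSeries.coeff an.2 (prodSer an.1 d)) ⊗ₜ[ℂ] MvPolynomial.coeff d (S an.1))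

/-- `id ⊗ Δ : F ⊗̂ H → F ⊗̂ H ⊗̂ H`. -/
def idΔ : TT →+* TT2 :=
  MvPowerSeries.map (MvPolynomial.map ΔH.toRingHom)

/-- `id ⊗ ε : F ⊗̂ H → F`. -/
def idε : TT →+* FF :=
  MvPowerSeries.map (MvPolynomial.map εH.toRingHom)

/-- The ideal `I ⊆ F` generated by `λ_i - λ₁^(N_i-2)`, `i = 2,3,4`. -/
def idealIF (N : Fin 5 → ℕ) : Ideal FF :=
  Ideal.span {x | ∃ i : Fin 5, i ∈ ({1, 2, 3} : Set (Fin 5)) ∧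
    x = MvPowerSeries.X i - (MvPowerSeries.X 0 : FF) ^ (N i - 2)}

/-- The Slavnov–Taylor Hopf ideal `J ⊆ H`, generated by the components of
`Y_{v_i} - Y_{v_1}^(N_i-2)`, `i = 2,3,4`. -/
def idealJH (N : Fin 5 → ℕ) : Ideal BH :=
  Ideal.span {x | ∃ i : Fin 5, i ∈ ({1, 2, 3} : Set (Fin 5)) ∧
    ∃ n : Md5, x = MvPowerSeries.coeff n (Yg i - (Yg 0) ^ (N i - 2))}

/-- The inclusion `F → F ⊗̂ H`, `f ↦ f ⊗ 1`. -/
def ιFT : FF →+* TT :=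
  MvPowerSeries.map (MvPolynomial.map (algebraMap ℂ BH))

/-! `ρH` is the ring homomorphism `λ_j ↦ λ_j ⊗ Y_{v_j}`, `φ_i ↦ φ_i ⊗ √G^{e_i}`: its
multiplicativity is that of `(a, d) ↦ Y^a (√G)^d`. Hence, with `e = N_i - 2`,
`ρ(λ_i - λ₁^e) = (λ_i - λ₁^e) ⊗ Y_{v_i} + λ₁^e ⊗ (Y_{v_i} - Y_{v_1}^e)`,
whose first summand lies in `I ⊗ H` and second in `F ⊗ J`. So the preimage of the ideal
`F ⊗ J + I ⊗ H` under `ρH` contains the generators of `I`, hence `I`. -/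

open Finset

theorem Finset.sum_antidiagonal_antidiagonal_transpose {A M : Type*} [AddCommMonoid A]
    [HasAntidiagonal A] [AddCommMonoid M] (m : A) (f : A → A → A → A → M) :
    ∑ p ∈ antidiagonal m, ∑ q ∈ antidiagonal p.1, ∑ r ∈ antidiagonal p.2, f q.1 q.2 r.1 r.2 =
      ∑ p ∈ antidiagonal m, ∑ q ∈ antidiagonal p.1, ∑ r ∈ antidiagonal p.2,
        f q.1 r.1 q.2 r.2 := by
  simp only [← sum_product', sum_sigma']
  apply sum_nbij' (fun ⟨_, (a, b), (c, d)⟩ ↦ ⟨(a + c, b + d), (a, c), (b, d)⟩)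
    (fun ⟨_, (a, b), (c, d)⟩ ↦ ⟨(a + c, b + d), (a, c), (b, d)⟩) <;>
    aesop (add simp [add_add_add_comm])

namespace MvPowerSeries

variable {σ τ R B : Type*} [DecidableEq σ] [CommSemiring R] [CommSemiring B] [Algebra R B]

/-- `λ^a φ^d ↦ λ^a φ^d · P a d`, extended coefficientwise; `ρH` is `twist prodSer` by
definition. -/
def twist (P : (σ →₀ ℕ) → (τ →₀ ℕ) → MvPowerSeries σ B)
    (S : MvPowerSeries σ (MvPolynomial τ R)) : MvPowerSeries σ (MvPolynomial τ B) :=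
  fun m => ∑ an ∈ antidiagonal m, ∑ d ∈ (S an.1).support,
    MvPolynomial.coeff d (S an.1) • MvPolynomial.monomial d (coeff an.2 (P an.1 d))

variable (P : (σ →₀ ℕ) → (τ →₀ ℕ) → MvPowerSeries σ B)

theorem coeff_twist (S : MvPowerSeries σ (MvPolynomial τ R)) (m : σ →₀ ℕ) (d : τ →₀ ℕ) :
    MvPolynomial.coeff d (coeff m (twist P S)) =
      ∑ an ∈ antidiagonal m, MvPolynomial.coeff d (coeff an.1 S) • coeff an.2 (P an.1 d) := by
  classical
  simp only [twist, coeff_apply, MvPolynomial.coeff_sum, MvPolynomial.coeff_smul,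
    MvPolynomial.coeff_monomial, smul_ite, smul_zero, sum_ite_eq']
  refine sum_congr rfl fun an _ => ?_
  split_ifs with h
  · rfl
  · rw [MvPolynomial.notMem_support_iff.1 h, zero_smul]

theorem twist_add (S T : MvPowerSeries σ (MvPolynomial τ R)) :
    twist P (S + T) = twist P S + twist P T := by
  ext m d
  simp only [map_add, MvPolynomial.coeff_add, coeff_twist, add_smul, sum_add_distrib]

theorem twist_zero : twist P (0 : MvPowerSeries σ (MvPolynomial τ R)) = 0 := by
  ext m d
  simp [coeff_twist]

theorem twist_one (hP : P 0 0 = 1) : twist P (1 : MvPowerSeries σ (MvPolynomial τ R)) = 1 := by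
  classical
  ext m d
  rw [coeff_twist, sum_eq_single (0, m)]
  · rcases eq_or_ne d 0 with rfl | hd
    · simp only [hP, coeff_one]
      split_ifs <;> simp
    · simp [MvPolynomial.coeff_one, hd.symm, coeff_one, apply_ite]
  · rintro ⟨a, n⟩ h ha
    rw [HasAntidiagonal.mem_antidiagonal] at h
    have : a ≠ 0 := by rintro rfl; simp_all
    simp [coeff_one, this]
  · simp

theorem twist_mul (hP : ∀ a a' d d', P (a + a') (d + d') = P a d * P a' d')
    (S T : MvPowerSeries σ (MvPolynomial τ R)) : twist P (S * T) = twist P S * twist P T := by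
  classical
  ext m d
  -- both sides sum over `q.1 + q.2 + r.1 + r.2 = m`, grouped by rows resp. by columns
  set g : (σ →₀ ℕ) → (σ →₀ ℕ) → (σ →₀ ℕ) → (σ →₀ ℕ) → B := fun a b n₁ n₂ =>
    ∑ e ∈ antidiagonal d, (MvPolynomial.coeff e.1 (coeff a S) • coeff n₁ (P a e.1)) *
      (MvPolynomial.coeff e.2 (coeff b T) • coeff n₂ (P b e.2)) with hg
  have lhs : MvPolynomial.coeff d (coeff m (twist P (S * T))) = ∑ p ∈ antidiagonal m,
      ∑ q ∈ antidiagonal p.1, ∑ r ∈ antidiagonal p.2, g q.1 q.2 r.1 r.2 := by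
    rw [coeff_twist]
    refine sum_congr rfl fun p _ => ?_
    simp only [coeff_mul, MvPolynomial.coeff_sum, MvPolynomial.coeff_mul, sum_smul]
    refine sum_congr rfl fun q hq => ?_
    rw [sum_comm]
    refine sum_congr rfl fun e he => ?_
    rw [HasAntidiagonal.mem_antidiagonal] at hq he
    rw [← hq, ← he, hP, coeff_mul, smul_sum]
    exact sum_congr rfl fun r _ => (smul_mul_smul_comm _ _ _ _).symm
  have rhs : MvPolynomial.coeff d (coeff m (twist P S * twist P T)) = ∑ p ∈ antidiagonal m,
      ∑ q ∈ antidiagonal p.1, ∑ r ∈ antidiagonal p.2, g q.1 r.1 q.2 r.2 := by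
    simp only [coeff_mul, MvPolynomial.coeff_sum, MvPolynomial.coeff_mul, coeff_twist,
      sum_mul_sum, hg]
    refine sum_congr rfl fun p _ => ?_
    rw [sum_comm]
    exact sum_congr rfl fun q _ => sum_comm
  rw [lhs, rhs, sum_antidiagonal_antidiagonal_transpose]

theorem twist_X (i : σ) :
    twist P (X i : MvPowerSeries σ (MvPolynomial τ R)) =
      X i * map MvPolynomial.C (P (Finsupp.single i 1) 0) := by
  classical
  ext m d
  simp only [coeff_twist, coeff_mul, MvPolynomial.coeff_sum, coeff_X, coeff_map]
  refine sum_congr rfl fun p _ => ?_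
  split_ifs <;> simp_all [MvPolynomial.coeff_one, MvPolynomial.coeff_C]

def twistRingHom (h₀ : P 0 0 = 1) (hP : ∀ a a' d d', P (a + a') (d + d') = P a d * P a' d') :
    MvPowerSeries σ (MvPolynomial τ R) →+* MvPowerSeries σ (MvPolynomial τ B) where
  toFun := twist P
  map_one' := twist_one P h₀
  map_mul' := twist_mul P hP
  map_zero' := twist_zero P
  map_add' := twist_add P

variable {A : Type*} [CommSemiring A]

/-- For `A = MvPolynomial (Fin 3) BH` and `I = J[φ]` this is the `F ⊗ J` of the statement. -/
def coeffIdeal (I : Ideal A) : Ideal (MvPowerSeries σ A) where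
  carrier := {f | ∀ n, coeff n f ∈ I}
  add_mem' hf hg n := by simpa using I.add_mem (hf n) (hg n)
  zero_mem' n := by simp
  smul_mem' c f hf n := by
    rw [smul_eq_mul, coeff_mul]
    exact I.sum_mem fun p _ => I.mul_mem_left _ (hf p.2)

theorem map_mem_coeffIdeal_map {A' : Type*} [CommSemiring A'] (φ : A →+* A') {I : Ideal A}
    {f : MvPowerSeries σ A} (hf : ∀ n, coeff n f ∈ I) : map φ f ∈ coeffIdeal (I.map φ) :=
  fun n => by
    rw [coeff_map]
    exact Ideal.mem_map_of_mem φ (hf n)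

end MvPowerSeries

open MvPowerSeries

theorem prodSer_zero : prodSer 0 0 = 1 := by
  simp [prodSer]

theorem prodSer_add (a a' : Md5) (d d' : Fin 3 →₀ ℕ) :
    prodSer (a + a') (d + d') = prodSer a d * prodSer a' d' := by
  simp only [prodSer, Finsupp.add_apply, pow_add, prod_mul_distrib]
  ring

theorem prodSer_single (i : Fin 5) : prodSer (Finsupp.single i 1) 0 = Yg i := by
  simp [prodSer, Finsupp.single_apply, pow_ite, prod_ite_eq]

def ρHRingHom : FF →+* TT :=
  twistRingHom prodSer prodSer_zero prodSer_add

theorem ρHRingHom_apply (S : FF) : ρHRingHom S = ρH S := rfl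

theorem ρH_X (i : Fin 5) : ρH (X i) = X i * map MvPolynomial.C (Yg i) := by
  rw [← prodSer_single]
  exact twist_X prodSer i

theorem ρH_X_sub_X_pow (i j : Fin 5) (e : ℕ) :
    ρH (X i - X j ^ e) =
      ιFT (X i - X j ^ e) * map MvPolynomial.C (Yg i) +
        X j ^ e * map MvPolynomial.C (Yg i - Yg j ^ e) := by
  rw [← ρHRingHom_apply, map_sub, map_pow, ρHRingHom_apply, ρHRingHom_apply, ρH_X, ρH_X]
  simp only [ιFT, map_sub, map_pow, map_X]
  ring

theorem idealIF_le_comap_ρHRingHom (N : Fin 5 → ℕ) :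
    idealIF N ≤ (coeffIdeal (Ideal.map MvPolynomial.C (idealJH N)) ⊔
      Ideal.map ιFT (idealIF N)).comap ρHRingHom := by
  refine Ideal.span_le.2 ?_
  rintro _ ⟨i, hi, rfl⟩
  rw [SetLike.mem_coe, Ideal.mem_comap, ρHRingHom_apply, ρH_X_sub_X_pow]
  refine add_mem (Ideal.mem_sup_right ?_) (Ideal.mem_sup_left ?_)
  · exact Ideal.mul_mem_right _ _ (Ideal.mem_map_of_mem _ (Ideal.subset_span ⟨i, hi, rfl⟩))
  · exact Ideal.mul_mem_left _ _
      (map_mem_coeffIdeal_map _ fun n => Ideal.subset_span ⟨i, hi, n, rfl⟩)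

theorem coaction_preserves_ST_ideals_general
    (N : Fin 5 → ℕ) :
    ∀ x ∈ idealIF N, ∃ u : TT,
      (∀ (m : Md5) (d : Fin 3 →₀ ℕ), MvPolynomial.coeff d (u m) ∈ idealJH N) ∧
      ρH x - u ∈ Ideal.span (ιFT '' {y | y ∈ idealIF N}) := by
  intro x hx
  obtain ⟨u, hu, k, hk, hρx⟩ := Submodule.mem_sup.1 (idealIF_le_comap_ρHRingHom N hx)
  refine ⟨u, fun m d => MvPolynomial.mem_map_C_iff.1 (hu m) d, ?_⟩
  rwa [← ρHRingHom_apply, ← hρx, add_sub_cancel_left]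

/-- `ρ(I) ⊆ I ⊗ H + F ⊗ J` (inside the completed tensor product
`F ⊗̂ H`, where `I ⊗ H` is the ideal generated by the image of `I` and `F ⊗ J`
consists of the series all of whose coefficients lie in `J`); consequently `ρ`
descends to a coaction of the quotient Hopf algebra `H/J` on `F/I`. -/
theorem coaction_preserves_ST_ideals
    (N : Fin 5 → ℕ) (hN0 : N 0 = 3) (hN1 : N 1 = 3) (hN2 : N 2 = 3) (hN3 : N 3 = 4) :
    ∀ x ∈ idealIF N, ∃ u : TT,
      (∀ (m : Md5) (d : Fin 3 →₀ ℕ), MvPolynomial.coeff d (u m) ∈ idealJH N) ∧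
      ρH x - u ∈ Ideal.span (ιFT '' {y | y ∈ idealIF N}) :=
  coaction_preserves_ST_ideals_general N
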